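/- arXiv:1309.3875 — 2 statements merged into one kernel-verified Lean document; each statement's English description precedes it below -/
import Mathlib

section
/- Let σ : ℝ² → ℝ be a smooth function, set τ = σ_{vv} − σ_{uu}, and define φ : ℝ² → ℂ² by φ(u,v) = ((σ − σ_{uu} + σ_{vv} + 2iσ_u) e^{iu}, (−σ − σ_{uu} + σ_{vv} − 2iσ_v) e^{iv}). With the inner product on ℂ² ≅ ℝ⁴ given by ⟨(z₁,z₂),(w₁,w₂)⟩ = Re(z₁ w̄₁) − Re(z₂ w̄₂), one has ⟨φ_u, φ_v⟩ = 0 and ⟨φ_u, φ_u⟩ = −⟨φ_v, φ_v⟩ = (σ + σ_{uu} + σ_{vv})² − 4σ_{uv}². -/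
open Complex

/-- Partial derivative with respect to the first variable. -/
noncomputable def pu (f : ℝ → ℝ → ℝ) : ℝ → ℝ → ℝ := fun u v => deriv (fun t => f t v) u

/-- Partial derivative with respect to the second variable. -/
noncomputable def pv (f : ℝ → ℝ → ℝ) : ℝ → ℝ → ℝ := fun u v => deriv (fun t => f u t) v

/-- Partial derivative (first variable) of a `ℂ × ℂ`-valued map. -/
noncomputable def puC (f : ℝ → ℝ → ℂ × ℂ) : ℝ → ℝ → ℂ × ℂ :=
  fun u v => (deriv (fun t => (f t v).1) u, deriv (fun t => (f t v).2) u)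

/-- Partial derivative (second variable) of a `ℂ × ℂ`-valued map. -/
noncomputable def pvC (f : ℝ → ℝ → ℂ × ℂ) : ℝ → ℝ → ℂ × ℂ :=
  fun u v => (deriv (fun t => (f u t).1) v, deriv (fun t => (f u t).2) v)

/-- The neutral inner product of signature `(2,2)` on `ℂ² ≃ ℝ⁴`. -/
noncomputable def neutralIP (z w : ℂ × ℂ) : ℝ :=
  (z.1 * (starRingEnd ℂ) w.1).re - (z.2 * (starRingEnd ℂ) w.2).re

lemma hasDerivAt_u (F : ℝ → ℝ → ℝ) (hF : ContDiff ℝ (⊤ : ℕ∞) (Function.uncurry F)) (u v : ℝ) :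
    HasDerivAt (fun t => F t v) (fderiv ℝ (Function.uncurry F) (u, v) (1, 0)) u := by
  have h := ((hF.differentiable (by simp)) (u, v)).hasFDerivAt
  have hline : HasDerivAt (fun t : ℝ => (t, v)) ((1 : ℝ), (0 : ℝ)) u :=
    (hasDerivAt_id u).prodMk (hasDerivAt_const u v)
  exact h.comp_hasDerivAt u hline

lemma hasDerivAt_v (F : ℝ → ℝ → ℝ) (hF : ContDiff ℝ (⊤ : ℕ∞) (Function.uncurry F)) (u v : ℝ) :
    HasDerivAt (fun t => F u t) (fderiv ℝ (Function.uncurry F) (u, v) (0, 1)) v := by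
  have h := ((hF.differentiable (by simp)) (u, v)).hasFDerivAt
  have hline : HasDerivAt (fun t : ℝ => (u, t)) ((0 : ℝ), (1 : ℝ)) v :=
    (hasDerivAt_const v u).prodMk (hasDerivAt_id v)
  exact h.comp_hasDerivAt v hline

lemma pu_eq (F : ℝ → ℝ → ℝ) (hF : ContDiff ℝ (⊤ : ℕ∞) (Function.uncurry F)) (u v : ℝ) :
    pu F u v = fderiv ℝ (Function.uncurry F) (u, v) (1, 0) :=
  (hasDerivAt_u F hF u v).deriv

lemma pv_eq (F : ℝ → ℝ → ℝ) (hF : ContDiff ℝ (⊤ : ℕ∞) (Function.uncurry F)) (u v : ℝ) :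
    pv F u v = fderiv ℝ (Function.uncurry F) (u, v) (0, 1) :=
  (hasDerivAt_v F hF u v).deriv

lemma hasDerivAt_pu (F : ℝ → ℝ → ℝ) (hF : ContDiff ℝ (⊤ : ℕ∞) (Function.uncurry F)) (u v : ℝ) :
    HasDerivAt (fun t => F t v) (pu F u v) u := by
  rw [pu_eq F hF u v]; exact hasDerivAt_u F hF u v

lemma hasDerivAt_pv (F : ℝ → ℝ → ℝ) (hF : ContDiff ℝ (⊤ : ℕ∞) (Function.uncurry F)) (u v : ℝ) :
    HasDerivAt (fun t => F u t) (pv F u v) v := by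
  rw [pv_eq F hF u v]; exact hasDerivAt_v F hF u v

lemma contDiff_pu (F : ℝ → ℝ → ℝ) (hF : ContDiff ℝ (⊤ : ℕ∞) (Function.uncurry F)) :
    ContDiff ℝ (⊤ : ℕ∞) (Function.uncurry (pu F)) := by
  have : Function.uncurry (pu F) = fun p : ℝ × ℝ => fderiv ℝ (Function.uncurry F) p (1, 0) := by
    funext p
    exact pu_eq F hF p.1 p.2
  rw [this]
  exact (hF.fderiv_right (by exact (by simp))).clm_apply contDiff_const

lemma contDiff_pv (F : ℝ → ℝ → ℝ) (hF : ContDiff ℝ (⊤ : ℕ∞) (Function.uncurry F)) :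
    ContDiff ℝ (⊤ : ℕ∞) (Function.uncurry (pv F)) := by
  have : Function.uncurry (pv F) = fun p : ℝ × ℝ => fderiv ℝ (Function.uncurry F) p (0, 1) := by
    funext p
    exact pv_eq F hF p.1 p.2
  rw [this]
  exact (hF.fderiv_right (by exact (by simp))).clm_apply contDiff_const

lemma clairaut (F : ℝ → ℝ → ℝ) (hF : ContDiff ℝ (⊤ : ℕ∞) (Function.uncurry F)) (u v : ℝ) :
    pv (pu F) u v = pu (pv F) u v := by
  set f := Function.uncurry F with hf
  have hdf : Differentiable ℝ (fderiv ℝ f) :=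
    (hF.fderiv_right (m := (⊤ : ℕ∞)) ((by simp))).differentiable (by simp)
  have key : ∀ (c : ℝ × ℝ) (x : ℝ × ℝ) (w : ℝ × ℝ),
      fderiv ℝ (fun p => fderiv ℝ f p c) x w = fderiv ℝ (fderiv ℝ f) x w c := by
    intro c x w
    rw [fderiv_clm_apply (hdf x) (differentiableAt_const c)]
    simp
  have hpu : ∀ p : ℝ × ℝ, pu F p.1 p.2 = fderiv ℝ f p (1, 0) := fun p => pu_eq F hF p.1 p.2
  have hpv : ∀ p : ℝ × ℝ, pv F p.1 p.2 = fderiv ℝ f p (0, 1) := fun p => pv_eq F hF p.1 p.2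
  have hG1 : Differentiable ℝ (fun p : ℝ × ℝ => fderiv ℝ f p ((1:ℝ), (0:ℝ))) :=
    fun x => (hdf x).clm_apply (differentiableAt_const _)
  have hG2 : Differentiable ℝ (fun p : ℝ × ℝ => fderiv ℝ f p ((0:ℝ), (1:ℝ))) :=
    fun x => (hdf x).clm_apply (differentiableAt_const _)
  have h1 : pv (pu F) u v
      = fderiv ℝ (fun p : ℝ × ℝ => fderiv ℝ f p ((1:ℝ),(0:ℝ))) (u, v) (0, 1) := by
    have : (fun t => pu F u t) = fun t => fderiv ℝ f (u, t) ((1:ℝ),(0:ℝ)) := by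
      funext t; exact hpu (u, t)
    unfold pv
    rw [this]
    have hline : HasDerivAt (fun t : ℝ => (u, t)) ((0 : ℝ), (1 : ℝ)) v :=
      (hasDerivAt_const v u).prodMk (hasDerivAt_id v)
    exact ((hG1 (u, v)).hasFDerivAt.comp_hasDerivAt v hline).deriv
  have h2 : pu (pv F) u v
      = fderiv ℝ (fun p : ℝ × ℝ => fderiv ℝ f p ((0:ℝ),(1:ℝ))) (u, v) (1, 0) := by
    have : (fun t => pv F t v) = fun t => fderiv ℝ f (t, v) ((0:ℝ),(1:ℝ)) := by
      funext t; exact hpv (t, v)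
    unfold pu
    rw [this]
    have hline : HasDerivAt (fun t : ℝ => (t, v)) ((1 : ℝ), (0 : ℝ)) u :=
      (hasDerivAt_id u).prodMk (hasDerivAt_const u v)
    exact ((hG2 (u, v)).hasFDerivAt.comp_hasDerivAt u hline).deriv
  have hsymm : IsSymmSndFDerivAt ℝ f (u, v) :=
    hF.contDiffAt.isSymmSndFDerivAt (by rw [minSmoothness_of_isRCLikeNormedField]; exact WithTop.coe_le_coe.mpr le_top)
  rw [h1, h2, key, key]
  exact hsymm _ _

lemma exp_mul_conj (x : ℝ) : Complex.exp (I * x) * (starRingEnd ℂ) (Complex.exp (I * x)) = 1 := by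
  rw [← Complex.exp_conj, ← Complex.exp_add]
  simp [Complex.conj_I]

lemma re_mul_conj_mul (X Y e : ℂ) (he : e * (starRingEnd ℂ) e = 1) :
    (X * e * (starRingEnd ℂ) (Y * e)).re = (X * (starRingEnd ℂ) Y).re := by
  have h : X * e * ((starRingEnd ℂ) Y * (starRingEnd ℂ) e)
      = X * (starRingEnd ℂ) Y * (e * (starRingEnd ℂ) e) := by ring
  rw [map_mul, h, he, mul_one]

theorem stmt_11 (σ : ℝ → ℝ → ℝ) (hσ : ContDiff ℝ (⊤ : ℕ∞) (Function.uncurry σ))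
    (τ : ℝ → ℝ → ℝ) (hτ : ∀ u v, τ u v = pv (pv σ) u v - pu (pu σ) u v)
    (φ : ℝ → ℝ → ℂ × ℂ)
    (hφ : ∀ u v, φ u v =
      (((σ u v : ℂ) - (pu (pu σ) u v : ℝ) + (pv (pv σ) u v : ℝ)
          + 2 * I * (pu σ u v : ℝ)) * exp (I * u),
       (-(σ u v : ℂ) - (pu (pu σ) u v : ℝ) + (pv (pv σ) u v : ℝ)
          - 2 * I * (pv σ u v : ℝ)) * exp (I * v))) :
    ∀ u v, neutralIP (puC φ u v) (pvC φ u v) = 0 ∧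
      neutralIP (puC φ u v) (puC φ u v)
        = (σ u v + pu (pu σ) u v + pv (pv σ) u v) ^ 2 - 4 * (pv (pu σ) u v) ^ 2 ∧
      neutralIP (pvC φ u v) (pvC φ u v)
        = -((σ u v + pu (pu σ) u v + pv (pv σ) u v) ^ 2 - 4 * (pv (pu σ) u v) ^ 2) := by
  intro u v
  have h_u : ContDiff ℝ (⊤ : ℕ∞) (Function.uncurry (pu σ)) := contDiff_pu σ hσ
  have h_v : ContDiff ℝ (⊤ : ℕ∞) (Function.uncurry (pv σ)) := contDiff_pv σ hσ
  have h_uu : ContDiff ℝ (⊤ : ℕ∞) (Function.uncurry (pu (pu σ))) := contDiff_pu _ h_u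
  have h_vv : ContDiff ℝ (⊤ : ℕ∞) (Function.uncurry (pv (pv σ))) := contDiff_pv _ h_v
  -- complex-valued partial derivative facts
  have HuC : ∀ (g : ℝ → ℝ → ℝ), ContDiff ℝ (⊤ : ℕ∞) (Function.uncurry g) →
      HasDerivAt (fun t => ((g t v : ℝ) : ℂ)) ((pu g u v : ℝ) : ℂ) u :=
    fun g hg => (hasDerivAt_pu g hg u v).ofReal_comp
  have HvC : ∀ (g : ℝ → ℝ → ℝ), ContDiff ℝ (⊤ : ℕ∞) (Function.uncurry g) →
      HasDerivAt (fun t => ((g u t : ℝ) : ℂ)) ((pv g u v : ℝ) : ℂ) v :=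
    fun g hg => (hasDerivAt_pv g hg u v).ofReal_comp
  have hexp : ∀ x : ℝ, HasDerivAt (fun t : ℝ => Complex.exp (I * (t : ℂ)))
      (Complex.exp (I * x) * I) x := by
    intro x
    have h1 : HasDerivAt (fun t : ℝ => I * (t : ℂ)) I x := by
      simpa using (Complex.ofRealCLM.hasDerivAt (x := x)).const_mul I
    simpa using h1.cexp
  -- the four derivatives
  have hA : HasDerivAt
      (fun t => ((σ t v : ℂ) - (pu (pu σ) t v : ℝ) + (pv (pv σ) t v : ℝ)
          + 2 * I * (pu σ t v : ℝ)))
      (((pu σ u v : ℂ) - (pu (pu (pu σ)) u v : ℝ) + (pu (pv (pv σ)) u v : ℝ)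
          + 2 * I * (pu (pu σ) u v : ℝ))) u :=
    (((HuC σ hσ).sub (HuC _ h_uu)).add (HuC _ h_vv)).add ((HuC _ h_u).const_mul (2 * I))
  have hB : HasDerivAt
      (fun t => (-(σ t v : ℂ) - (pu (pu σ) t v : ℝ) + (pv (pv σ) t v : ℝ)
          - 2 * I * (pv σ t v : ℝ)))
      ((-(pu σ u v : ℂ) - (pu (pu (pu σ)) u v : ℝ) + (pu (pv (pv σ)) u v : ℝ)
          - 2 * I * (pu (pv σ) u v : ℝ))) u :=
    ((((HuC σ hσ).neg.sub (HuC _ h_uu)).add (HuC _ h_vv)).sub ((HuC _ h_v).const_mul (2 * I)))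
  have hAv : HasDerivAt
      (fun t => ((σ u t : ℂ) - (pu (pu σ) u t : ℝ) + (pv (pv σ) u t : ℝ)
          + 2 * I * (pu σ u t : ℝ)))
      (((pv σ u v : ℂ) - (pv (pu (pu σ)) u v : ℝ) + (pv (pv (pv σ)) u v : ℝ)
          + 2 * I * (pv (pu σ) u v : ℝ))) v :=
    (((HvC σ hσ).sub (HvC _ h_uu)).add (HvC _ h_vv)).add ((HvC _ h_u).const_mul (2 * I))
  have hBv : HasDerivAt
      (fun t => (-(σ u t : ℂ) - (pu (pu σ) u t : ℝ) + (pv (pv σ) u t : ℝ)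
          - 2 * I * (pv σ u t : ℝ)))
      ((-(pv σ u v : ℂ) - (pv (pu (pu σ)) u v : ℝ) + (pv (pv (pv σ)) u v : ℝ)
          - 2 * I * (pv (pv σ) u v : ℝ))) v :=
    ((((HvC σ hσ).neg.sub (HvC _ h_uu)).add (HvC _ h_vv)).sub ((HvC _ h_v).const_mul (2 * I)))
  -- the components of puC φ and pvC φ
  have hd1u : deriv (fun t => (φ t v).1) u
      = (((pu σ u v : ℂ) - (pu (pu (pu σ)) u v : ℝ) + (pu (pv (pv σ)) u v : ℝ)
          + 2 * I * (pu (pu σ) u v : ℝ))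
        + ((σ u v : ℂ) - (pu (pu σ) u v : ℝ) + (pv (pv σ) u v : ℝ)
          + 2 * I * (pu σ u v : ℝ)) * I) * Complex.exp (I * u) := by
    have hfun : (fun t => (φ t v).1)
        = fun t => ((σ t v : ℂ) - (pu (pu σ) t v : ℝ) + (pv (pv σ) t v : ℝ)
          + 2 * I * (pu σ t v : ℝ)) * Complex.exp (I * t) := by
      funext t; rw [hφ]
    rw [hfun, (hA.fun_mul (hexp u)).deriv]
    ring
  have hd2u : deriv (fun t => (φ t v).2) u
      = (-(pu σ u v : ℂ) - (pu (pu (pu σ)) u v : ℝ) + (pu (pv (pv σ)) u v : ℝ)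
          - 2 * I * (pu (pv σ) u v : ℝ)) * Complex.exp (I * v) := by
    have hfun : (fun t => (φ t v).2)
        = fun t => (-(σ t v : ℂ) - (pu (pu σ) t v : ℝ) + (pv (pv σ) t v : ℝ)
          - 2 * I * (pv σ t v : ℝ)) * Complex.exp (I * v) := by
      funext t; rw [hφ]
    rw [hfun, (hB.mul_const _).deriv]
  have hd1v : deriv (fun t => (φ u t).1) v
      = (((pv σ u v : ℂ) - (pv (pu (pu σ)) u v : ℝ) + (pv (pv (pv σ)) u v : ℝ)
          + 2 * I * (pv (pu σ) u v : ℝ))) * Complex.exp (I * u) := by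
    have hfun : (fun t => (φ u t).1)
        = fun t => ((σ u t : ℂ) - (pu (pu σ) u t : ℝ) + (pv (pv σ) u t : ℝ)
          + 2 * I * (pu σ u t : ℝ)) * Complex.exp (I * u) := by
      funext t; rw [hφ]
    rw [hfun, (hAv.mul_const _).deriv]
  have hd2v : deriv (fun t => (φ u t).2) v
      = ((-(pv σ u v : ℂ) - (pv (pu (pu σ)) u v : ℝ) + (pv (pv (pv σ)) u v : ℝ)
          - 2 * I * (pv (pv σ) u v : ℝ))
        + (-(σ u v : ℂ) - (pu (pu σ) u v : ℝ) + (pv (pv σ) u v : ℝ)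
          - 2 * I * (pv σ u v : ℝ)) * I) * Complex.exp (I * v) := by
    have hfun : (fun t => (φ u t).2)
        = fun t => (-(σ u t : ℂ) - (pu (pu σ) u t : ℝ) + (pv (pv σ) u t : ℝ)
          - 2 * I * (pv σ u t : ℝ)) * Complex.exp (I * t) := by
      funext t; rw [hφ]
    rw [hfun, (hBv.fun_mul (hexp v)).deriv]
    ring
  have hq : pu (pv σ) u v = pv (pu σ) u v := (clairaut σ hσ u v).symm
  unfold puC pvC neutralIP
  rw [hd1u, hd2u, hd1v, hd2v, hq]
  simp only [re_mul_conj_mul _ _ _ (exp_mul_conj u), re_mul_conj_mul _ _ _ (exp_mul_conj v)]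
  refine ⟨?_, ?_, ?_⟩ <;>
  · simp only [map_add, map_sub, map_mul, map_neg, map_ofNat, Complex.conj_I, Complex.conj_ofReal]
    simp only [Complex.add_re, Complex.sub_re, Complex.neg_re, Complex.mul_re, Complex.mul_im,
      Complex.add_im, Complex.sub_im, Complex.neg_im, Complex.I_re, Complex.I_im,
      Complex.ofReal_re, Complex.ofReal_im, Complex.re_ofNat, Complex.im_ofNat]
    ring
end

section
/- Let φ = (ψ, τ) : M → ℝ^{n+1} × ℝ be an immersion of an n-manifold whose induced pseudo-Riemannian metric (for the signature (p+1,q+1) inner product on ℝ^{n+2}) is nondegenerate, and let ν̃ = (ν, 1) be a null normal field along φ. Set σ := ψ − τν. Then the map (σ, ν) : M → ℝ^{n+1} × ℝ^{n+1} is an immersion, i.e. at every point there is no nonzero tangent vector v with dσ(v) = 0 and dν(v) = 0. -/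
/-!
If `dσ(v) = dν(v) = 0` for `σ = ψ - τ • ν`, the product rule gives `dψ(v) = dτ(v) • ν`, so
`dφ(v) = dτ(v) • (ν, 1)` is a multiple of the normal `ν̃ = (ν, 1)`. It is then orthogonal to
every tangent vector `dφ(w)`, and nondegeneracy of the induced metric forces `v = 0`.
-/

/-- The pseudo-Euclidean inner product of signature `(r, s)` on `Fin m → ℝ` (`m = r + s`). -/
noncomputable def pseudoInner (r m : ℕ) (x y : Fin m → ℝ) : ℝ :=
  ∑ i : Fin m, (if (i : ℕ) < r then (1 : ℝ) else -1) * x i * y i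

/-- The inner product of signature `(p+1, q+1)` on `ℝ^{n+2} = ℝ^{n+1} × ℝ`,
the last coordinate counting negatively. -/
noncomputable def ambientForm (p n : ℕ) (x y : (Fin (n + 1) → ℝ) × ℝ) : ℝ :=
  pseudoInner (p + 1) (n + 1) x.1 y.1 - x.2 * y.2

lemma pseudoInner_comm (r m : ℕ) (x y : Fin m → ℝ) :
    pseudoInner r m x y = pseudoInner r m y x :=
  Finset.sum_congr rfl fun _ _ => by ring

lemma pseudoInner_smul_left (r m : ℕ) (c : ℝ) (x y : Fin m → ℝ) :
    pseudoInner r m (c • x) y = c * pseudoInner r m x y := by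
  simp only [pseudoInner, Finset.mul_sum, Pi.smul_apply, smul_eq_mul]
  exact Finset.sum_congr rfl fun _ _ => by ring

lemma ambientForm_comm (p n : ℕ) (x y : (Fin (n + 1) → ℝ) × ℝ) :
    ambientForm p n x y = ambientForm p n y x := by
  rw [ambientForm, ambientForm, pseudoInner_comm, mul_comm x.2]

lemma ambientForm_smul_left (p n : ℕ) (c : ℝ) (x y : (Fin (n + 1) → ℝ) × ℝ) :
    ambientForm p n (c • x) y = c * ambientForm p n x y := by
  simp only [ambientForm, Prod.smul_fst, Prod.smul_snd, smul_eq_mul, pseudoInner_smul_left]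
  ring

section Calculus

variable {𝕜 E F : Type*} [NontriviallyNormedField 𝕜] [NormedAddCommGroup E] [NormedSpace 𝕜 E]
  [NormedAddCommGroup F] [NormedSpace 𝕜 F] {f h : E → F} {g : E → 𝕜} {x : E} {v : E}

lemma fderiv_sub_smul_apply (hf : DifferentiableAt 𝕜 f x) (hg : DifferentiableAt 𝕜 g x)
    (hh : DifferentiableAt 𝕜 h x) :
    fderiv 𝕜 (fun y => f y - g y • h y) x v
      = fderiv 𝕜 f x v - (g x • fderiv 𝕜 h x v + fderiv 𝕜 g x v • h x) := by
  rw [fderiv_fun_sub (g := fun y => g y • h y) hf (hg.smul hh), fderiv_fun_smul hg hh]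
  rfl

lemma fderiv_apply_eq_smul_of_fderiv_sub_smul_apply_eq_zero (hf : DifferentiableAt 𝕜 f x)
    (hg : DifferentiableAt 𝕜 g x) (hh : DifferentiableAt 𝕜 h x)
    (hσ : fderiv 𝕜 (fun y => f y - g y • h y) x v = 0) (hhv : fderiv 𝕜 h x v = 0) :
    fderiv 𝕜 f x v = fderiv 𝕜 g x v • h x := by
  rwa [fderiv_sub_smul_apply hf hg hh, hhv, smul_zero, zero_add, sub_eq_zero] at hσ

lemma fderiv_prodMk_apply_eq_smul_of_fderiv_sub_smul_apply_eq_zero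
    (hf : DifferentiableAt 𝕜 f x) (hg : DifferentiableAt 𝕜 g x) (hh : DifferentiableAt 𝕜 h x)
    (hσ : fderiv 𝕜 (fun y => f y - g y • h y) x v = 0) (hhv : fderiv 𝕜 h x v = 0) :
    fderiv 𝕜 (fun y => (f y, g y)) x v = fderiv 𝕜 g x v • (h x, (1 : 𝕜)) := by
  rw [hf.fderiv_prodMk hg, ContinuousLinearMap.prod_apply, Prod.smul_mk, smul_eq_mul, mul_one,
    fderiv_apply_eq_smul_of_fderiv_sub_smul_apply_eq_zero hf hg hh hσ hhv]

end Calculus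

theorem stmt_15_general {E : Type*} [NormedAddCommGroup E] [NormedSpace ℝ E]
    (n p : ℕ)
    (ψ : E → Fin (n + 1) → ℝ) (τ : E → ℝ) (ν : E → Fin (n + 1) → ℝ)
    (hψ : Differentiable ℝ ψ) (hτ : Differentiable ℝ τ) (hν : Differentiable ℝ ν)
    (hnd : ∀ x (v : E),
      (∀ w : E, ambientForm p n (fderiv ℝ (fun y => (ψ y, τ y)) x v)
        (fderiv ℝ (fun y => (ψ y, τ y)) x w) = 0) → v = 0)
    (hnormal : ∀ x (v : E),
      ambientForm p n (fderiv ℝ (fun y => (ψ y, τ y)) x v) (ν x, 1) = 0) :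
    ∀ x (v : E),
      fderiv ℝ (fun y => ψ y - τ y • ν y) x v = 0 →
      fderiv ℝ ν x v = 0 → v = 0 := by
  intro x v hσ hνv
  have hφv : fderiv ℝ (fun y => (ψ y, τ y)) x v = fderiv ℝ τ x v • (ν x, 1) :=
    fderiv_prodMk_apply_eq_smul_of_fderiv_sub_smul_apply_eq_zero (hψ x) (hτ x) (hν x) hσ hνv
  refine hnd x v fun w => ?_
  rw [hφv, ambientForm_smul_left, ambientForm_comm, hnormal, mul_zero]

theorem stmt_15 {E : Type*} [NormedAddCommGroup E] [NormedSpace ℝ E]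
    [FiniteDimensional ℝ E] (n p q : ℕ) (hpq : p + q = n)
    (hdim : Module.finrank ℝ E = n)
    (ψ : E → Fin (n + 1) → ℝ) (τ : E → ℝ) (ν : E → Fin (n + 1) → ℝ)
    (hψ : Differentiable ℝ ψ) (hτ : Differentiable ℝ τ) (hν : Differentiable ℝ ν)
    (himm : ∀ x, Function.Injective (fderiv ℝ (fun y => (ψ y, τ y)) x))
    (hnd : ∀ x (v : E),
      (∀ w : E, ambientForm p n (fderiv ℝ (fun y => (ψ y, τ y)) x v)
        (fderiv ℝ (fun y => (ψ y, τ y)) x w) = 0) → v = 0)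
    (hnull : ∀ x, pseudoInner (p + 1) (n + 1) (ν x) (ν x) = 1)
    (hnormal : ∀ x (v : E),
      ambientForm p n (fderiv ℝ (fun y => (ψ y, τ y)) x v) (ν x, 1) = 0) :
    ∀ x (v : E),
      fderiv ℝ (fun y => ψ y - τ y • ν y) x v = 0 →
      fderiv ℝ ν x v = 0 → v = 0 :=
  stmt_15_general n p ψ τ ν hψ hτ hν hnd hnormal
end
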